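/- arXiv:1306.1797 — 4 statements merged into one kernel-verified Lean document; each statement's English description precedes it below -/
import Mathlib

section
/- For any nonnegative function ρ ∈ L¹(ℝ) with finite second moment, any λ > 0, and any φ ∈ H¹(ℝ), one has λ³ ∬_{ℝ²} ρ(λ(x−y)) (φ(x)−φ(y))² dx dy ≤ (∫_ℝ ρ(x)|x|² dx) (∫_ℝ |φ'(x)|² dx). -/
/-!
Substituting `y = x - z` and applying Tonelli turns the left side into
`λ³ ∫ ρ(λz) ‖φ(· + z) - φ‖²_{L²} dz`. Writing `φ(x + z) - φ(x) = z ∫₀¹ φ'(x + sz) ds`,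
Jensen's inequality and translation invariance give `‖φ(· + z) - φ‖²_{L²} ≤ z² ‖φ'‖²_{L²}`,
and the scaling `u = λz` gives `λ³ ∫ ρ(λz) z² dz = ∫ ρ(u) u² du`. Working with lower Lebesgue
integrals postpones all integrability questions to the final comparison with Bochner integrals.
-/

open MeasureTheory Real
open scoped ENNReal

theorem sq_lintegral_le_lintegral_sq {α : Type*} [MeasurableSpace α] {μ : Measure α}
    [IsProbabilityMeasure μ] {f : α → ℝ≥0∞} (hf : AEMeasurable f μ) :
    (∫⁻ a, f a ∂μ) ^ 2 ≤ ∫⁻ a, f a ^ 2 ∂μ := by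
  have hholder := ENNReal.lintegral_mul_le_Lp_mul_Lq μ Real.HolderConjugate.two_two hf
    aemeasurable_const (g := 1)
  simp only [Pi.mul_apply, Pi.one_apply, mul_one, lintegral_const, measure_univ,
    ENNReal.rpow_two, one_pow, ENNReal.one_rpow] at hholder
  calc (∫⁻ a, f a ∂μ) ^ 2 ≤ ((∫⁻ a, f a ^ 2 ∂μ) ^ (1 / 2 : ℝ)) ^ 2 := by gcongr
    _ = ∫⁻ a, f a ^ 2 ∂μ := by
      rw [← ENNReal.rpow_natCast, ← ENNReal.rpow_mul]; norm_num

theorem lintegral_comp_mul_left (g : ℝ → ℝ≥0∞) {a : ℝ} (ha : a ≠ 0) :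
    ∫⁻ x, g (a * x) = ‖a‖ₑ⁻¹ * ∫⁻ y, g y := by
  have h := lintegral_map_equiv g (MeasurableEquiv.mulLeft₀ a ha) (μ := volume)
  rw [MeasurableEquiv.coe_mulLeft₀, Real.map_volume_mul_left ha, lintegral_smul_measure] at h
  rw [← h, smul_eq_mul, abs_inv, ENNReal.ofReal_inv_of_pos (abs_pos.2 ha), ← Real.norm_eq_abs,
    ofReal_norm]

theorem enorm_pow_three_mul_lintegral_comp_mul_left (g : ℝ → ℝ≥0∞) {l : ℝ} (hl : l ≠ 0) :
    ‖l‖ₑ ^ 3 * ∫⁻ z, g (l * z) * ‖z‖ₑ ^ 2 = ∫⁻ u, g u * ‖u‖ₑ ^ 2 := by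
  have key := lintegral_comp_mul_left (fun u => g u * ‖u‖ₑ ^ 2) hl
  simp only [enorm_mul, mul_pow] at key
  simp only [mul_left_comm (g _) (‖l‖ₑ ^ 2)] at key
  rw [lintegral_const_mul' _ _ (by simp)] at key
  calc ‖l‖ₑ ^ 3 * ∫⁻ z, g (l * z) * ‖z‖ₑ ^ 2
      = ‖l‖ₑ * (‖l‖ₑ ^ 2 * ∫⁻ z, g (l * z) * ‖z‖ₑ ^ 2) := by ring
    _ = ∫⁻ u, g u * ‖u‖ₑ ^ 2 := by
      rw [key, ← mul_assoc, ENNReal.mul_inv_cancel (by simpa) enorm_ne_top, one_mul]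

theorem integral_integral_le_toReal_lintegral_lintegral_enorm {α β : Type*} [MeasurableSpace α]
    [MeasurableSpace β] {μ : Measure α} {ν : Measure β} {f : α → β → ℝ}
    (hf : ∫⁻ x, ∫⁻ y, ‖f x y‖ₑ ∂ν ∂μ ≠ ∞) :
    ∫ x, ∫ y, f x y ∂ν ∂μ ≤ (∫⁻ x, ∫⁻ y, ‖f x y‖ₑ ∂ν ∂μ).toReal := calc
  _ ≤ ‖∫ x, ∫ y, f x y ∂ν ∂μ‖ₑ.toReal := by rw [toReal_enorm]; exact Real.le_norm_self _
  _ ≤ _ := ENNReal.toReal_mono hf <| (enorm_integral_le_lintegral_enorm _).trans <|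
    lintegral_mono fun _ => enorm_integral_le_lintegral_enorm _

section

variable {E : Type*} [NormedAddCommGroup E] [NormedSpace ℝ E] [CompleteSpace E]

theorem enorm_add_sub_sq_le_lintegral_deriv {φ : ℝ → E} (hφ : Differentiable ℝ φ)
    (hφ' : LocallyIntegrable (deriv φ)) (x z : ℝ) :
    ‖φ (x + z) - φ x‖ₑ ^ 2 ≤ ‖z‖ₑ ^ 2 * ∫⁻ s in Set.Ioc 0 1, ‖deriv φ (z * s + x)‖ₑ ^ 2 := by
  have hftc : φ (x + z) - φ x = z • ∫ s in (0 : ℝ)..1, deriv φ (z * s + x) := by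
    rw [intervalIntegral.smul_integral_comp_mul_add, intervalIntegral.integral_deriv_eq_sub
      (fun t _ => hφ t) ((hφ'.integrableOn_isCompact isCompact_uIcc).intervalIntegrable)]
    simp [add_comm]
  have : IsProbabilityMeasure (volume.restrict (Set.Ioc (0 : ℝ) 1)) := ⟨by simp⟩
  have hmeas : Measurable fun s : ℝ => ‖deriv φ (z * s + x)‖ₑ :=
    (stronglyMeasurable_deriv φ).enorm.comp (by fun_prop)
  rw [hftc, enorm_smul, mul_pow, intervalIntegral.integral_of_le zero_le_one]
  gcongr
  calc ‖∫ s in Set.Ioc 0 1, deriv φ (z * s + x)‖ₑ ^ 2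
      ≤ (∫⁻ s in Set.Ioc 0 1, ‖deriv φ (z * s + x)‖ₑ) ^ 2 := by
        gcongr; exact enorm_integral_le_lintegral_enorm _
    _ ≤ _ := sq_lintegral_le_lintegral_sq hmeas.aemeasurable

theorem lintegral_enorm_add_sub_sq_le {φ : ℝ → E} (hφ : Differentiable ℝ φ)
    (hφ' : LocallyIntegrable (deriv φ)) (z : ℝ) :
    ∫⁻ x, ‖φ (x + z) - φ x‖ₑ ^ 2 ≤ ‖z‖ₑ ^ 2 * ∫⁻ x, ‖deriv φ x‖ₑ ^ 2 := by
  have hmeas : Measurable fun p : ℝ × ℝ => ‖deriv φ (z * p.2 + p.1)‖ₑ ^ 2 :=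
    ((stronglyMeasurable_deriv φ).enorm.comp (by fun_prop)).pow_const 2
  calc ∫⁻ x, ‖φ (x + z) - φ x‖ₑ ^ 2
      ≤ ∫⁻ x, ‖z‖ₑ ^ 2 * ∫⁻ s in Set.Ioc 0 1, ‖deriv φ (z * s + x)‖ₑ ^ 2 :=
        lintegral_mono fun x => enorm_add_sub_sq_le_lintegral_deriv hφ hφ' x z
    _ = ‖z‖ₑ ^ 2 * ∫⁻ s in Set.Ioc 0 1, ∫⁻ x, ‖deriv φ (z * s + x)‖ₑ ^ 2 := by
        rw [lintegral_const_mul' _ _ (by simp), lintegral_lintegral_swap hmeas.aemeasurable]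
    _ = ‖z‖ₑ ^ 2 * ∫⁻ x, ‖deriv φ x‖ₑ ^ 2 := by
        simp [lintegral_add_left_eq_self (fun t => ‖deriv φ t‖ₑ ^ 2)]

theorem enorm_pow_three_mul_lintegral_lintegral_le {g : ℝ → ℝ≥0∞} (hg : AEMeasurable g)
    {φ : ℝ → E} (hφ : Differentiable ℝ φ) (hφ' : LocallyIntegrable (deriv φ)) {l : ℝ}
    (hl : l ≠ 0) :
    ‖l‖ₑ ^ 3 * ∫⁻ x, ∫⁻ y, g (l * (x - y)) * ‖φ x - φ y‖ₑ ^ 2 ≤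
      (∫⁻ u, g u * ‖u‖ₑ ^ 2) * ∫⁻ x, ‖deriv φ x‖ₑ ^ 2 := by
  have hg_scaled : AEMeasurable fun z => g (l * z) :=
    hg.comp_quasiMeasurePreserving (Measure.quasiMeasurePreserving_smul volume hl)
  have hmoment : AEMeasurable fun z => g (l * z) * ‖z‖ₑ ^ 2 :=
    hg_scaled.mul (measurable_enorm.pow_const 2).aemeasurable
  have hφc := hφ.continuous
  have hdiff (z : ℝ) : Measurable fun x => ‖φ x - φ (x - z)‖ₑ ^ 2 :=
    (by fun_prop : Continuous _).measurable
  have hsubst : ∫⁻ x, ∫⁻ y, g (l * (x - y)) * ‖φ x - φ y‖ₑ ^ 2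
      = ∫⁻ z, g (l * z) * ∫⁻ x, ‖φ (x + z) - φ x‖ₑ ^ 2 := calc
    _ = ∫⁻ x, ∫⁻ z, g (l * z) * ‖φ x - φ (x - z)‖ₑ ^ 2 := lintegral_congr fun x => by
        rw [← lintegral_sub_left_eq_self _ x]
        simp only [sub_sub_cancel]
    _ = ∫⁻ z, ∫⁻ x, g (l * z) * ‖φ x - φ (x - z)‖ₑ ^ 2 :=
        lintegral_lintegral_swap <|
          hg_scaled.comp_snd.mul (by fun_prop : Continuous _).measurable.aemeasurable
    _ = ∫⁻ z, g (l * z) * ∫⁻ x, ‖φ (x + z) - φ x‖ₑ ^ 2 := lintegral_congr fun z => by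
        rw [lintegral_const_mul _ (hdiff z), ← lintegral_add_right_eq_self _ z]
        simp only [add_sub_cancel_right]
  calc ‖l‖ₑ ^ 3 * ∫⁻ x, ∫⁻ y, g (l * (x - y)) * ‖φ x - φ y‖ₑ ^ 2
      ≤ ‖l‖ₑ ^ 3 * ∫⁻ z, g (l * z) * (‖z‖ₑ ^ 2 * ∫⁻ x, ‖deriv φ x‖ₑ ^ 2) := by
        rw [hsubst]
        gcongr with z
        exact lintegral_enorm_add_sub_sq_le hφ hφ' z
    _ = (∫⁻ u, g u * ‖u‖ₑ ^ 2) * ∫⁻ x, ‖deriv φ x‖ₑ ^ 2 := by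
        simp only [← mul_assoc]
        rw [lintegral_mul_const'' _ hmoment, ← mul_assoc,
          enorm_pow_three_mul_lintegral_comp_mul_left g hl]

end

theorem stmt0_general (ρ φ : ℝ → ℝ) (hρ_nonneg : ∀ x, 0 ≤ ρ x)
    (hρ_int : Integrable ρ) (hρ_mom : Integrable (fun x => ρ x * x ^ 2))
    (hφ_diff : Differentiable ℝ φ)
    (hφ'_L2 : MemLp (deriv φ) 2 (volume : Measure ℝ))
    (l : ℝ) (hl : 0 < l) :
    l ^ 3 * ∫ x : ℝ, ∫ y : ℝ, ρ (l * (x - y)) * (φ x - φ y) ^ 2 ≤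
      (∫ x : ℝ, ρ x * |x| ^ 2) * ∫ x : ℝ, |deriv φ x| ^ 2 := by
  set K := ∫⁻ x, ∫⁻ y, ‖ρ (l * (x - y)) * (φ x - φ y) ^ 2‖ₑ
  set M := ∫⁻ u, ‖ρ u * u ^ 2‖ₑ
  set D := ∫⁻ x, ‖deriv φ x ^ 2‖ₑ
  have hbound : ‖l‖ₑ ^ 3 * K ≤ M * D := by
    simpa only [K, M, D, enorm_mul, enorm_pow] using enorm_pow_three_mul_lintegral_lintegral_le
      hρ_int.aemeasurable.enorm hφ_diff (hφ'_L2.locallyIntegrable one_le_two) hl.ne'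
  have hMD : M * D ≠ ∞ := ENNReal.mul_ne_top hρ_mom.2.ne hφ'_L2.integrable_sq.2.ne
  have hK : K ≠ ∞ := fun hK => hMD <| top_le_iff.1 <|
    hbound.trans' (by rw [hK, ENNReal.mul_top (by simp [hl.ne'])])
  have hM : M.toReal = ∫ x, ρ x * |x| ^ 2 := by
    rw [← integral_norm_eq_lintegral_enorm hρ_mom.1]
    congr with x
    rw [sq_abs, Real.norm_of_nonneg (mul_nonneg (hρ_nonneg x) (sq_nonneg x))]
  have hD : D.toReal = ∫ x, |deriv φ x| ^ 2 := by
    rw [← integral_norm_eq_lintegral_enorm hφ'_L2.integrable_sq.1]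
    simp only [norm_pow, Real.norm_eq_abs]
  calc l ^ 3 * ∫ x, ∫ y, ρ (l * (x - y)) * (φ x - φ y) ^ 2 ≤ l ^ 3 * K.toReal := by
        gcongr; exact integral_integral_le_toReal_lintegral_lintegral_enorm hK
    _ = (‖l‖ₑ ^ 3 * K).toReal := by simp [abs_of_pos hl]
    _ ≤ (M * D).toReal := ENNReal.toReal_mono hMD hbound
    _ = _ := by rw [ENNReal.toReal_mul, hM, hD]

/-- For any nonnegative `ρ ∈ L¹(ℝ)` with finite second moment, any `λ > 0`,
and any `φ ∈ H¹(ℝ)`, one has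
`λ³ ∬ ρ(λ(x−y)) (φ(x)−φ(y))² dx dy ≤ (∫ ρ(x)|x|² dx) (∫ |φ'(x)|² dx)`. -/
theorem stmt0 (ρ φ : ℝ → ℝ) (hρ_nonneg : ∀ x, 0 ≤ ρ x)
    (hρ_int : Integrable ρ) (hρ_mom : Integrable (fun x => ρ x * x ^ 2))
    (hφ_diff : Differentiable ℝ φ) (hφ_L2 : MemLp φ 2 (volume : Measure ℝ))
    (hφ'_L2 : MemLp (deriv φ) 2 (volume : Measure ℝ))
    (l : ℝ) (hl : 0 < l) :
    l ^ 3 * ∫ x : ℝ, ∫ y : ℝ, ρ (l * (x - y)) * (φ x - φ y) ^ 2 ≤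
      (∫ x : ℝ, ρ x * |x| ^ 2) * ∫ x : ℝ, |deriv φ x| ^ 2 :=
  stmt0_general ρ φ hρ_nonneg hρ_int hρ_mom hφ_diff hφ'_L2 l hl
end

section
/- Let ρ ∈ L¹(ℝ) be nonnegative with finite second moment, ρ not identically zero, and for n ≥ 1 set ρ_n(x) = n ρ(n x). For any χ ∈ W^{1,∞}(ℝ) there is a constant C(χ) > 0 such that for every positive integer n and every u ∈ L²(ℝ): n² ∬_{ℝ²} ρ_n(x−y) ((χu)(x) − (χu)(y))² dx dy ≤ C(χ) n² ∬_{ℝ²} ρ_n(x−y)(u(x) − u(y))² dx dy + C(χ) (∫_ℝ ρ(z) z² dz) ‖u‖²_{L²(ℝ)}. -/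
/-!
Since `χu(x) - χu(y) = χ(x) (u(x) - u(y)) + (χ(x) - χ(y)) u(y)`, boundedness and the Lipschitz
property of `χ` give `(χu(x) - χu(y))² ≤ 2B² (u(x) - u(y))² + 2K² (x - y)² u(y)²`. Integrated
against `ρₙ(x - y)`, the last term factors after the substitution `z = x - y` into
`(∫ ρₙ(z) z² dz) ‖u‖₂² = n⁻² (∫ ρ(z) z² dz) ‖u‖₂²`, and the factor `n⁻²` is exactly compensated
by the `n²` in front of the energies.
-/

open MeasureTheory

section ConvolutionIntegrand

variable {G : Type*} [MeasurableSpace G] [AddGroup G] [MeasurableAdd₂ G] [MeasurableNeg G]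
  {μ : Measure G} [SFinite μ] [μ.IsAddRightInvariant] {f g : G → ℝ}

theorem integrable_comp_sub_mul_snd (hf : Integrable f μ) (hg : Integrable g μ) :
    Integrable (fun p : G × G => f (p.1 - p.2) * g p.2) (μ.prod μ) := by
  simpa only [ContinuousLinearMap.mul_apply', mul_comm] using
    hg.convolution_integrand (ContinuousLinearMap.mul ℝ ℝ) hf

theorem integrable_comp_sub_mul_fst [μ.IsNegInvariant] (hf : Integrable f μ)
    (hg : Integrable g μ) :
    Integrable (fun p : G × G => f (p.1 - p.2) * g p.1) (μ.prod μ) := by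
  simpa only [Function.comp_def, Prod.fst_swap, Prod.snd_swap, neg_sub] using
    (integrable_comp_sub_mul_snd hf.comp_neg hg).swap

theorem integral_comp_sub_mul_snd (hf : Integrable f μ) (hg : Integrable g μ) :
    ∫ p : G × G, f (p.1 - p.2) * g p.2 ∂(μ.prod μ) = (∫ x, f x ∂μ) * ∫ x, g x ∂μ := by
  rw [integral_prod_symm _ (integrable_comp_sub_mul_snd hf hg)]
  simp_rw [integral_mul_const, integral_sub_right_eq_self]
  exact integral_const_mul _ _

end ConvolutionIntegrand

theorem toReal_eLpNorm_two_sq {α : Type*} [MeasurableSpace α] {μ : Measure α} {u : α → ℝ}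
    (hu : AEStronglyMeasurable u μ) : (eLpNorm u 2 μ).toReal ^ 2 = ∫ x, u x ^ 2 ∂μ := by
  rw [toReal_eLpNorm hu, lpNorm_eq_integral_norm_rpow_toReal two_ne_zero ENNReal.ofNat_ne_top hu,
    ← Real.rpow_natCast, ← Real.rpow_mul (integral_nonneg fun x => by positivity)]
  norm_num

theorem sq_mul_sub_mul_le (s t a b : ℝ) :
    (s * a - t * b) ^ 2 ≤ 2 * s ^ 2 * (a - b) ^ 2 + 2 * (s - t) ^ 2 * b ^ 2 := by
  nlinarith [sq_nonneg (s * (a - b) - (s - t) * b)]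

theorem integral_comp_mul_left_mul_sq (ρ : ℝ → ℝ) {c : ℝ} (hc : 0 < c) :
    ∫ z, c * ρ (c * z) * z ^ 2 = (∫ z, ρ z * z ^ 2) / c ^ 2 := by
  have hscale := Measure.integral_comp_mul_left (fun z => ρ z * z ^ 2) c
  have hpt : ∀ z, c * ρ (c * z) * z ^ 2 = c⁻¹ * (ρ (c * z) * (c * z) ^ 2) := fun z => by
    field_simp
  simp_rw [hpt, integral_const_mul, hscale, abs_of_pos (inv_pos.2 hc), smul_eq_mul]
  field_simp

theorem MeasureTheory.Integrable.comp_mul_left_mul_sq {ρ : ℝ → ℝ}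
    (hρ : Integrable fun z => ρ z * z ^ 2) {c : ℝ} (hc : c ≠ 0) :
    Integrable fun z => c * ρ (c * z) * z ^ 2 := by
  have hpt : ∀ z, c * ρ (c * z) * z ^ 2 = c⁻¹ * (ρ (c * z) * (c * z) ^ 2) := fun z => by
    field_simp
  simpa only [hpt] using (hρ.comp_mul_left' hc).const_mul c⁻¹

noncomputable def nonlocalEnergy (k u : ℝ → ℝ) : ℝ :=
  ∫ x, ∫ y, k (x - y) * (u x - u y) ^ 2

section NonlocalEnergy

variable {k u : ℝ → ℝ}

theorem nonlocalEnergy_nonneg (hk : ∀ z, 0 ≤ k z) : 0 ≤ nonlocalEnergy k u :=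
  integral_nonneg fun _ => integral_nonneg fun _ => mul_nonneg (hk _) (sq_nonneg _)

theorem aestronglyMeasurable_nonlocalEnergy_integrand (hk : AEStronglyMeasurable k)
    (hu : AEStronglyMeasurable u) :
    AEStronglyMeasurable (fun p : ℝ × ℝ => k (p.1 - p.2) * (u p.1 - u p.2) ^ 2)
      (volume.prod volume) :=
  (hk.comp_quasiMeasurePreserving (quasiMeasurePreserving_sub volume volume)).mul
    ((hu.comp_fst.sub hu.comp_snd).pow 2)

theorem integrable_nonlocalEnergy_integrand (hk : Integrable k) (hu : MemLp u 2) :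
    Integrable (fun p : ℝ × ℝ => k (p.1 - p.2) * (u p.1 - u p.2) ^ 2) (volume.prod volume) := by
  have hu2 := hu.integrable_sq
  refine Integrable.mono' ((integrable_comp_sub_mul_fst hk.norm hu2).add
      (integrable_comp_sub_mul_snd hk.norm hu2) |>.const_mul 2)
    (aestronglyMeasurable_nonlocalEnergy_integrand hk.1 hu.1) (.of_forall fun p => ?_)
  simp only [norm_mul, norm_pow, Real.norm_eq_abs, sq_abs, Pi.add_apply]
  have := abs_nonneg (k (p.1 - p.2))
  nlinarith [mul_nonneg this (sq_nonneg (u p.1 + u p.2))]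

theorem nonlocalEnergy_eq_integral_prod (hk : Integrable k) (hu : MemLp u 2) :
    nonlocalEnergy k u =
      ∫ p : ℝ × ℝ, k (p.1 - p.2) * (u p.1 - u p.2) ^ 2 ∂(volume.prod volume) :=
  integral_integral (integrable_nonlocalEnergy_integrand hk hu)

theorem nonlocalEnergy_mul_le {χ : ℝ → ℝ} {K : NNReal} {B : ℝ} (hk_nonneg : ∀ z, 0 ≤ k z)
    (hk : Integrable k) (hk_mom : Integrable fun z => k z * z ^ 2) (hχ_lip : LipschitzWith K χ)
    (hχ_bdd : ∀ x, |χ x| ≤ B) (hu : MemLp u 2) :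
    nonlocalEnergy k (fun x => χ x * u x) ≤
      2 * B ^ 2 * nonlocalEnergy k u + 2 * K ^ 2 * (∫ z, k z * z ^ 2) * ∫ x, u x ^ 2 := by
  set J := fun p : ℝ × ℝ => k (p.1 - p.2) * (u p.1 - u p.2) ^ 2
  set R := fun p : ℝ × ℝ => k (p.1 - p.2) * (p.1 - p.2) ^ 2 * u p.2 ^ 2
  have hJ : Integrable J (volume.prod volume) := integrable_nonlocalEnergy_integrand hk hu
  have hR : Integrable R (volume.prod volume) :=
    integrable_comp_sub_mul_snd hk_mom hu.integrable_sq
  have hbound : ∀ p : ℝ × ℝ,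
      k (p.1 - p.2) * (χ p.1 * u p.1 - χ p.2 * u p.2) ^ 2 ≤ 2 * B ^ 2 * J p + 2 * K ^ 2 * R p := by
    intro p
    have hχ_sq : χ p.1 ^ 2 ≤ B ^ 2 := sq_le_sq' (abs_le.1 (hχ_bdd _)).1 (abs_le.1 (hχ_bdd _)).2
    have hχ_diff : (χ p.1 - χ p.2) ^ 2 ≤ K ^ 2 * (p.1 - p.2) ^ 2 := by
      have hlip := hχ_lip.dist_le_mul p.1 p.2
      rw [Real.dist_eq, Real.dist_eq] at hlip
      calc (χ p.1 - χ p.2) ^ 2 = |χ p.1 - χ p.2| ^ 2 := (sq_abs _).symm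
        _ ≤ (K * |p.1 - p.2|) ^ 2 := by gcongr
        _ = K ^ 2 * (p.1 - p.2) ^ 2 := by rw [mul_pow, sq_abs]
    calc k (p.1 - p.2) * (χ p.1 * u p.1 - χ p.2 * u p.2) ^ 2
        ≤ k (p.1 - p.2) * (2 * χ p.1 ^ 2 * (u p.1 - u p.2) ^ 2
            + 2 * (χ p.1 - χ p.2) ^ 2 * u p.2 ^ 2) :=
          mul_le_mul_of_nonneg_left (sq_mul_sub_mul_le _ _ _ _) (hk_nonneg _)
      _ ≤ k (p.1 - p.2) * (2 * B ^ 2 * (u p.1 - u p.2) ^ 2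
            + 2 * (K ^ 2 * (p.1 - p.2) ^ 2) * u p.2 ^ 2) := by
          have := hk_nonneg (p.1 - p.2)
          gcongr
      _ = 2 * B ^ 2 * J p + 2 * K ^ 2 * R p := by ring
  have hχu : AEStronglyMeasurable (fun x => χ x * u x) :=
    hχ_lip.continuous.aestronglyMeasurable.mul hu.1
  have hI := (hJ.const_mul (2 * B ^ 2)).add (hR.const_mul (2 * K ^ 2)) |>.mono'
    (aestronglyMeasurable_nonlocalEnergy_integrand hk.1 hχu) (.of_forall fun p => by
      rw [Real.norm_of_nonneg (mul_nonneg (hk_nonneg _) (sq_nonneg _))]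
      exact hbound p)
  calc nonlocalEnergy k (fun x => χ x * u x)
      = ∫ p : ℝ × ℝ, k (p.1 - p.2) * (χ p.1 * u p.1 - χ p.2 * u p.2) ^ 2 ∂(volume.prod volume) :=
        integral_integral hI
    _ ≤ ∫ p, (2 * B ^ 2 * J p + 2 * K ^ 2 * R p) ∂(volume.prod volume) :=
        integral_mono hI ((hJ.const_mul _).add (hR.const_mul _)) hbound
    _ = 2 * B ^ 2 * nonlocalEnergy k u + 2 * K ^ 2 * (∫ z, k z * z ^ 2) * ∫ x, u x ^ 2 := by
        have hJ_eq : ∫ p, J p ∂(volume.prod volume) = nonlocalEnergy k u :=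
          (nonlocalEnergy_eq_integral_prod hk hu).symm
        have hR_eq : ∫ p, R p ∂(volume.prod volume) = (∫ z, k z * z ^ 2) * ∫ x, u x ^ 2 :=
          integral_comp_sub_mul_snd hk_mom hu.integrable_sq
        rw [integral_add (hJ.const_mul _) (hR.const_mul _), integral_const_mul, integral_const_mul,
          hJ_eq, hR_eq]
        ring

end NonlocalEnergy

theorem stmt1_general (ρ : ℝ → ℝ) (hρ_nonneg : ∀ x, 0 ≤ ρ x) (hρ_int : Integrable ρ)
    (hρ_mom : Integrable (fun z => ρ z * z ^ 2))
    (χ : ℝ → ℝ) (K : NNReal) (hχ_lip : LipschitzWith K χ)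
    (hχ_bdd : ∃ B, ∀ x, |χ x| ≤ B) :
    ∃ C > 0, ∀ n : ℕ, 0 < n → ∀ u : ℝ → ℝ, MemLp u 2 (volume : Measure ℝ) →
      (n : ℝ) ^ 2 * ∫ x : ℝ, ∫ y : ℝ,
          (n : ℝ) * ρ ((n : ℝ) * (x - y)) * (χ x * u x - χ y * u y) ^ 2 ≤
        C * (n : ℝ) ^ 2 * (∫ x : ℝ, ∫ y : ℝ,
            (n : ℝ) * ρ ((n : ℝ) * (x - y)) * (u x - u y) ^ 2) +
        C * (∫ z : ℝ, ρ z * z ^ 2) * (eLpNorm u 2 (volume : Measure ℝ)).toReal ^ 2 := by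
  obtain ⟨B, hB⟩ := hχ_bdd
  refine ⟨2 * B ^ 2 + 2 * K ^ 2 + 1, by positivity, fun n hn u hu => ?_⟩
  have hn : (0 : ℝ) < n := Nat.cast_pos.2 hn
  set ρn : ℝ → ℝ := fun z => n * ρ (n * z)
  have hρn_nonneg : ∀ z, 0 ≤ ρn z := fun z => mul_nonneg hn.le (hρ_nonneg _)
  have key := nonlocalEnergy_mul_le hρn_nonneg ((hρ_int.comp_mul_left' hn.ne').const_mul _)
    (hρ_mom.comp_mul_left_mul_sq hn.ne') hχ_lip hB hu
  rw [integral_comp_mul_left_mul_sq ρ hn, ← toReal_eLpNorm_two_sq hu.1] at key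
  have hE := nonlocalEnergy_nonneg (u := u) hρn_nonneg
  have hM : 0 ≤ ∫ z, ρ z * z ^ 2 := integral_nonneg fun z => mul_nonneg (hρ_nonneg z) (sq_nonneg z)
  change (n : ℝ) ^ 2 * nonlocalEnergy ρn (fun x => χ x * u x) ≤
    _ * (n : ℝ) ^ 2 * nonlocalEnergy ρn u + _
  calc (n : ℝ) ^ 2 * nonlocalEnergy ρn (fun x => χ x * u x)
      ≤ (n : ℝ) ^ 2 * (2 * B ^ 2 * nonlocalEnergy ρn u + 2 * K ^ 2 *
          ((∫ z, ρ z * z ^ 2) / n ^ 2) * (eLpNorm u 2).toReal ^ 2) := by gcongr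
    _ = 2 * B ^ 2 * ((n : ℝ) ^ 2 * nonlocalEnergy ρn u) +
          2 * K ^ 2 * ((∫ z, ρ z * z ^ 2) * (eLpNorm u 2).toReal ^ 2) := by field_simp
    _ ≤ (2 * B ^ 2 + 2 * K ^ 2 + 1) * ((n : ℝ) ^ 2 * nonlocalEnergy ρn u) +
          (2 * B ^ 2 + 2 * K ^ 2 + 1) * ((∫ z, ρ z * z ^ 2) * (eLpNorm u 2).toReal ^ 2) := by
        gcongr <;> linarith [sq_nonneg (K : ℝ), sq_nonneg B]
    _ = _ := by ring

/-- localization estimate for the nonlocal quadratic form. -/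
theorem stmt1 (ρ : ℝ → ℝ) (hρ_nonneg : ∀ x, 0 ≤ ρ x) (hρ_int : Integrable ρ)
    (hρ_mom : Integrable (fun z => ρ z * z ^ 2)) (hρ_ne : ρ ≠ 0)
    (χ : ℝ → ℝ) (K : NNReal) (hχ_lip : LipschitzWith K χ)
    (hχ_bdd : ∃ B, ∀ x, |χ x| ≤ B) :
    ∃ C > 0, ∀ n : ℕ, 0 < n → ∀ u : ℝ → ℝ, MemLp u 2 (volume : Measure ℝ) →
      (n : ℝ) ^ 2 * ∫ x : ℝ, ∫ y : ℝ,
          (n : ℝ) * ρ ((n : ℝ) * (x - y)) * (χ x * u x - χ y * u y) ^ 2 ≤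
        C * (n : ℝ) ^ 2 * (∫ x : ℝ, ∫ y : ℝ,
            (n : ℝ) * ρ ((n : ℝ) * (x - y)) * (u x - u y) ^ 2) +
        C * (∫ z : ℝ, ρ z * z ^ 2) * (eLpNorm u 2 (volume : Measure ℝ)).toReal ^ 2 :=
  stmt1_general ρ hρ_nonneg hρ_int hρ_mom χ K hχ_lip hχ_bdd
end

section
/- Let J ∈ L¹(ℝ) be nonnegative, even, mass one, with finite second moment, and J_λ(x) = λ J(λ x). Then for every φ ∈ C_c^∞(ℝ) and every u ∈ L¹(ℝ) ∩ L^∞(ℝ), λ² ∫_ℝ (J_λ ∗ φ − φ)(x) u(x) dx → A ∫_ℝ u(x) φ''(x) dx as λ → ∞, where A = (1/2) ∫_ℝ J(z) z² dz. -/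
open MeasureTheory Real Filter


/-- MVT: smooth function with derivative bounded by `C` is `C`-Lipschitz. -/
lemma aux_lip {f : ℝ → ℝ} (hf : ContDiff ℝ (⊤:ℕ∞) f) {C : ℝ} (hC : ∀ t, |deriv f t| ≤ C)
    (a b : ℝ) : |f a - f b| ≤ C * |a - b| := by
  have := Convex.norm_image_sub_le_of_norm_deriv_le
    (f := f) (s := Set.univ) (C := C)
    (fun x _ => (hf.differentiable (by simp)).differentiableAt)
    (fun x _ => hC x) convex_univ (Set.mem_univ b) (Set.mem_univ a)
  simpa [Real.norm_eq_abs] using this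

/-- Second-difference bound. -/
lemma aux_sec_bound {f : ℝ → ℝ} (hf : ContDiff ℝ (⊤:ℕ∞) f) {C : ℝ}
    (hC : ∀ t, |deriv (deriv f) t| ≤ C) (x h : ℝ) :
    |f (x - h) + f (x + h) - 2 * f x| ≤ 2 * C * h ^ 2 := by
  have hf1 : ContDiff ℝ (⊤:ℕ∞) (deriv f) := (contDiff_infty_iff_deriv.mp hf).2
  have hdf : ∀ t, HasDerivAt f (deriv f t) t :=
    fun t => (hf.differentiable (by simp) t).hasDerivAt
  set ψ : ℝ → ℝ := fun t => f (x - t) + f (x + t) - 2 * f x with hψ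
  have hψd : ∀ t, HasDerivAt ψ (deriv f (x + t) - deriv f (x - t)) t := by
    intro t
    have h1 : HasDerivAt (fun t : ℝ => f (x - t)) (deriv f (x - t) * (-1)) t :=
      (hdf (x - t)).comp t ((hasDerivAt_id t).const_sub x)
    have h2 : HasDerivAt (fun t : ℝ => f (x + t)) (deriv f (x + t) * 1) t :=
      (hdf (x + t)).comp t ((hasDerivAt_id t).const_add x)
    have := (h1.add h2).sub_const (2 * f x)
    convert this using 1
    all_goals first | rfl | ring
  have hC0 : 0 ≤ C := le_trans (abs_nonneg _) (hC 0)
  have key : ∀ t ∈ Set.uIcc (0:ℝ) h, |deriv f (x + t) - deriv f (x - t)| ≤ 2 * C * |h| := by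
    intro t ht
    have habs : |t| ≤ |h| := by
      rcases Set.mem_uIcc.mp ht with ⟨h1, h2⟩ | ⟨h1, h2⟩ <;>
        · rw [abs_le]
          constructor <;> [linarith [neg_abs_le h, le_abs_self h];
            linarith [neg_abs_le h, le_abs_self h]]
    calc |deriv f (x + t) - deriv f (x - t)| ≤ C * |(x + t) - (x - t)| :=
          aux_lip hf1 hC _ _
      _ = C * (2 * |t|) := by rw [show (x + t) - (x - t) = 2 * t by ring, abs_mul]; norm_num
      _ ≤ C * (2 * |h|) := by
          apply mul_le_mul_of_nonneg_left _ hC0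
          linarith
      _ = 2 * C * |h| := by ring
  have := Convex.norm_image_sub_le_of_norm_hasDerivWithin_le
    (f := ψ) (f' := fun t => deriv f (x + t) - deriv f (x - t)) (s := Set.uIcc (0:ℝ) h)
    (fun t _ => (hψd t).hasDerivWithinAt)
    (fun t ht => by simpa [Real.norm_eq_abs] using key t ht)
    (convex_uIcc 0 h) Set.left_mem_uIcc Set.right_mem_uIcc
  have hψ0 : ψ 0 = 0 := by simp [hψ]; ring
  rw [hψ0, sub_zero, Real.norm_eq_abs, Real.norm_eq_abs, sub_zero] at this
  calc |ψ h| ≤ 2 * C * |h| * |h| := this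
    _ = 2 * C * h ^ 2 := by rw [mul_assoc, abs_mul_abs_self]; ring


/-- Second symmetric difference quotient converges to the second derivative. -/
lemma aux_taylor2 {f : ℝ → ℝ} (hf : ContDiff ℝ (⊤:ℕ∞) f) (x z : ℝ) :
    Tendsto (fun l : ℝ => l ^ 2 * (f (x - z / l) + f (x + z / l) - 2 * f x)) atTop
      (nhds (z ^ 2 * deriv (deriv f) x)) := by
  have hf1 : ContDiff ℝ (⊤:ℕ∞) (deriv f) := (contDiff_infty_iff_deriv.mp hf).2
  have hdf : ∀ t, HasDerivAt f (deriv f t) t :=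
    fun t => (hf.differentiable (by simp) t).hasDerivAt
  have hdf1 : ∀ t, HasDerivAt (deriv f) (deriv (deriv f) t) t :=
    fun t => (hf1.differentiable (by simp) t).hasDerivAt
  set d := deriv (deriv f) x with hd
  -- the error term is little-o
  have o1 : (fun h : ℝ => deriv f (x + h) - deriv f x - h • d) =o[nhds 0] fun h => h :=
    hasDerivAt_iff_isLittleO_nhds_zero.mp (hdf1 x)
  have o2 : (fun h : ℝ => deriv f (x + -h) - deriv f x - (-h) • d) =o[nhds 0] fun h => h := by
    have hneg : Tendsto (fun h : ℝ => -h) (nhds 0) (nhds 0) := by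
      simpa using (continuous_neg.tendsto (0:ℝ))
    exact (o1.comp_tendsto hneg).trans_isBigO ((Asymptotics.isBigO_refl (fun t : ℝ => t) _).neg_left)
  have hE : (fun t : ℝ => deriv f (x + t) - deriv f (x - t) - 2 * t * d) =o[nhds 0]
      fun t => t := by
    have := o1.sub o2
    have heq : (fun h : ℝ => deriv f (x + h) - deriv f x - h • d
        - (deriv f (x + -h) - deriv f x - (-h) • d))
        = fun t : ℝ => deriv f (x + t) - deriv f (x - t) - 2 * t * d := by
      funext t; simp only [smul_eq_mul, sub_eq_add_neg, neg_neg]; ring_nf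
    rwa [heq] at this
  rw [Metric.tendsto_atTop]
  intro ε hε
  set ε' := ε / (2 * (z ^ 2 + 1)) with hε'def
  have hε' : 0 < ε' := by positivity
  obtain ⟨δ, hδ0, hδ⟩ := Metric.eventually_nhds_iff.mp (hE.def hε')
  refine ⟨max 1 (|z| / δ + 1), fun l hl => ?_⟩
  have hl1 : (1:ℝ) ≤ l := le_trans (le_max_left _ _) hl
  have hl0 : 0 < l := lt_of_lt_of_le one_pos hl1
  have hzl : |z / l| < δ := by
    rw [abs_div, abs_of_pos hl0, div_lt_iff₀ hl0]
    have : |z| / δ + 1 ≤ l := le_trans (le_max_right _ _) hl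
    have h2 : |z| / δ < l := lt_of_lt_of_le (by linarith) this
    calc |z| = (|z| / δ) * δ := by field_simp
      _ < l * δ := by exact mul_lt_mul_of_pos_right h2 hδ0
      _ = δ * l := mul_comm _ _
  set h := z / l with hh
  -- MVT estimate for g
  set g : ℝ → ℝ := fun t => f (x - t) + f (x + t) - 2 * f x - t ^ 2 * d with hg
  have hgd : ∀ t, HasDerivAt g (deriv f (x + t) - deriv f (x - t) - 2 * t * d) t := by
    intro t
    have h1 : HasDerivAt (fun t : ℝ => f (x - t)) (deriv f (x - t) * (-1)) t :=
      (hdf (x - t)).comp t ((hasDerivAt_id t).const_sub x)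
    have h2 : HasDerivAt (fun t : ℝ => f (x + t)) (deriv f (x + t) * 1) t :=
      (hdf (x + t)).comp t ((hasDerivAt_id t).const_add x)
    have h3 : HasDerivAt (fun t : ℝ => t ^ 2 * d) (2 * t ^ 1 * d) t := by
      simpa using (hasDerivAt_pow 2 t).mul_const d
    have := ((h1.add h2).sub_const (2 * f x)).sub h3
    convert this using 1
    all_goals first | rfl | ring
  have hbd : ∀ t ∈ Set.uIcc (0:ℝ) h, ‖deriv f (x + t) - deriv f (x - t) - 2 * t * d‖
      ≤ ε' * |h| := by
    intro t ht
    have habs : |t| ≤ |h| := by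
      rcases Set.mem_uIcc.mp ht with ⟨ha, hb⟩ | ⟨ha, hb⟩ <;>
        · rw [abs_le]
          constructor <;> [linarith [neg_abs_le h, le_abs_self h];
            linarith [neg_abs_le h, le_abs_self h]]
    have ht' : dist t 0 < δ := by
      rw [Real.dist_eq, sub_zero]; exact lt_of_le_of_lt habs hzl
    have := hδ ht'
    rw [Real.norm_eq_abs, Real.norm_eq_abs] at this
    exact le_trans this (by nlinarith [abs_nonneg t, abs_nonneg h, hε'.le])
  have hmvt := Convex.norm_image_sub_le_of_norm_hasDerivWithin_le
    (f := g) (f' := fun t => deriv f (x + t) - deriv f (x - t) - 2 * t * d)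
    (s := Set.uIcc (0:ℝ) h)
    (fun t _ => (hgd t).hasDerivWithinAt) hbd
    (convex_uIcc 0 h) Set.left_mem_uIcc Set.right_mem_uIcc
  have hg0 : g 0 = 0 := by simp [hg]; ring
  rw [hg0, sub_zero, Real.norm_eq_abs, Real.norm_eq_abs, sub_zero] at hmvt
  have hgh : |g h| ≤ ε' * h ^ 2 := le_trans hmvt (by rw [mul_assoc, abs_mul_abs_self]; ring_nf; rfl)
  have hkey : l ^ 2 * (f (x - z / l) + f (x + z / l) - 2 * f x) - z ^ 2 * d = l ^ 2 * g h := by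
    have hz2 : l ^ 2 * (z / l) ^ 2 = z ^ 2 := by field_simp
    simp only [hg, hh]
    linear_combination d * hz2
  rw [Real.dist_eq, hkey, abs_mul, abs_pow, sq_abs]
  have : l ^ 2 * |g h| ≤ ε' * z ^ 2 := by
    calc l ^ 2 * |g h| ≤ l ^ 2 * (ε' * h ^ 2) :=
          mul_le_mul_of_nonneg_left hgh (by positivity)
      _ = ε' * (l ^ 2 * h ^ 2) := by ring
      _ = ε' * z ^ 2 := by rw [hh]; field_simp
  calc l ^ 2 * |g h| ≤ ε' * z ^ 2 := this
    _ < ε := by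
        rw [hε'def]
        rw [div_mul_eq_mul_div, div_lt_iff₀ (by positivity)]
        nlinarith

/-- `λ² ∫ (J_λ ∗ φ − φ) u → A ∫ u φ''` as `λ → ∞`, with
`A = (1/2) ∫ J(z) z² dz`. -/
theorem stmt9 (J : ℝ → ℝ) (hJ_nonneg : ∀ x, 0 ≤ J x) (hJ_even : ∀ x, J (-x) = J x)
    (hJ_int : Integrable J) (hJ_mass : ∫ x : ℝ, J x = 1)
    (hJ_mom : Integrable (fun z => J z * z ^ 2))
    (u : ℝ → ℝ) (hu_int : Integrable u) (hu_bdd : ∃ B, ∀ x, |u x| ≤ B)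
    (hu_meas : Measurable u)
    (φ : ℝ → ℝ) (hφ_smooth : ContDiff ℝ (⊤ : ℕ∞) φ) (hφ_supp : HasCompactSupport φ) :
    Tendsto (fun l : ℝ =>
        l ^ 2 * ∫ x : ℝ, ((∫ y : ℝ, l * J (l * (x - y)) * φ y) - φ x) * u x)
      atTop
      (nhds (((1 : ℝ) / 2 * ∫ z : ℝ, J z * z ^ 2) *
        ∫ x : ℝ, u x * deriv (deriv φ) x)) := by
  have hφ : ContDiff ℝ (⊤:ℕ∞) φ := hφ_smooth.of_le (by simp)
  have hφ1 : ContDiff ℝ (⊤:ℕ∞) (deriv φ) := (contDiff_infty_iff_deriv.mp hφ).2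
  have hφ2 : ContDiff ℝ (⊤:ℕ∞) (deriv (deriv φ)) := (contDiff_infty_iff_deriv.mp hφ1).2
  set d : ℝ → ℝ := deriv (deriv φ) with hd
  obtain ⟨C, hC⟩ := (hφ_supp.deriv.deriv).exists_bound_of_continuous hφ2.continuous
  have hC' : ∀ t, |d t| ≤ C := fun t => by simpa [Real.norm_eq_abs] using hC t
  have hC0 : 0 ≤ C := le_trans (abs_nonneg _) (hC' 0)
  set G : ℝ → ℝ × ℝ → ℝ := fun l p =>
    (1 / 2 * (l ^ 2 * (φ (p.1 - p.2 / l) + φ (p.1 + p.2 / l) - 2 * φ p.1)) * u p.1) * J p.2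
    with hG
  set bound : ℝ × ℝ → ℝ := fun p => (C * |u p.1|) * (J p.2 * p.2 ^ 2) with hbound
  -- the pointwise domination
  have hdom : ∀ l : ℝ, 0 < l → ∀ p : ℝ × ℝ, |G l p| ≤ bound p := by
    intro l hl p
    have hsec : |φ (p.1 - p.2 / l) + φ (p.1 + p.2 / l) - 2 * φ p.1| ≤ 2 * C * (p.2 / l) ^ 2 :=
      aux_sec_bound hφ hC' p.1 (p.2 / l)
    have e1 : |G l p| = 1 / 2 * (l ^ 2 * |φ (p.1 - p.2 / l) + φ (p.1 + p.2 / l) - 2 * φ p.1|)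
        * |u p.1| * J p.2 := by
      simp only [hG, abs_mul, abs_pow, sq_abs, abs_of_nonneg (hJ_nonneg p.2),
        abs_of_nonneg (by norm_num : (0:ℝ) ≤ 1/2)]
      try ring
    rw [e1, hbound]
    have hz2 : l ^ 2 * (p.2 / l) ^ 2 = p.2 ^ 2 := by field_simp
    have : 1 / 2 * (l ^ 2 * |φ (p.1 - p.2 / l) + φ (p.1 + p.2 / l) - 2 * φ p.1|)
        ≤ C * p.2 ^ 2 := by
      calc 1 / 2 * (l ^ 2 * |φ (p.1 - p.2 / l) + φ (p.1 + p.2 / l) - 2 * φ p.1|)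
          ≤ 1 / 2 * (l ^ 2 * (2 * C * (p.2 / l) ^ 2)) := by
            apply mul_le_mul_of_nonneg_left _ (by norm_num)
            exact mul_le_mul_of_nonneg_left hsec (by positivity)
        _ = C * (l ^ 2 * (p.2 / l) ^ 2) := by ring
        _ = C * p.2 ^ 2 := by rw [hz2]
    calc 1 / 2 * (l ^ 2 * |φ (p.1 - p.2 / l) + φ (p.1 + p.2 / l) - 2 * φ p.1|) * |u p.1| * J p.2
        ≤ C * p.2 ^ 2 * |u p.1| * J p.2 := by
          apply mul_le_mul_of_nonneg_right _ (hJ_nonneg p.2)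
          exact mul_le_mul_of_nonneg_right this (abs_nonneg _)
      _ = C * |u p.1| * (J p.2 * p.2 ^ 2) := by ring
  have hbound_int : Integrable bound (volume.prod volume) :=
    (hu_int.abs.const_mul C).mul_prod hJ_mom
  -- measurability of G l
  have hGmeas : ∀ l : ℝ, AEStronglyMeasurable (G l) (volume.prod volume) := by
    intro l
    apply AEStronglyMeasurable.mul
    · apply AEStronglyMeasurable.mul
      · have hc : Continuous φ := hφ_smooth.continuous
        exact (Continuous.aestronglyMeasurable (by fun_prop))
      · exact (hu_meas.comp measurable_fst).aestronglyMeasurable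
    · exact hJ_int.1.comp_quasiMeasurePreserving Measure.quasiMeasurePreserving_snd
  have hGint : ∀ l : ℝ, 0 < l → Integrable (G l) (volume.prod volume) := by
    intro l hl
    refine hbound_int.mono' (hGmeas l) ?_
    exact Filter.Eventually.of_forall (fun p => by
      rw [Real.norm_eq_abs]; exact hdom l hl p)
  -- pointwise limit
  have hlim : ∀ p : ℝ × ℝ, Tendsto (fun l => G l p) atTop
      (nhds ((1 / 2 * (p.2 ^ 2 * d p.1) * u p.1) * J p.2)) := by
    intro p
    exact (((aux_taylor2 hφ p.1 p.2).const_mul (1/2)).mul_const (u p.1)).mul_const (J p.2)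
  -- dominated convergence
  have hT : Tendsto (fun l => ∫ p, G l p ∂(volume.prod volume)) atTop
      (nhds (∫ p : ℝ × ℝ, (1 / 2 * (p.2 ^ 2 * d p.1) * u p.1) * J p.2
        ∂(volume.prod volume))) := by
    apply tendsto_integral_filter_of_dominated_convergence bound
      (Eventually.of_forall hGmeas) _ hbound_int (Eventually.of_forall hlim)
    filter_upwards [eventually_gt_atTop 0] with l hl
    exact Eventually.of_forall (fun p => by rw [Real.norm_eq_abs]; exact hdom l hl p)
  -- value of the limit integral
  have hval : (∫ p : ℝ × ℝ, (1 / 2 * (p.2 ^ 2 * d p.1) * u p.1) * J p.2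
      ∂(volume.prod volume))
      = ((1 : ℝ) / 2 * ∫ z : ℝ, J z * z ^ 2) * ∫ x : ℝ, u x * d x := by
    calc (∫ p : ℝ × ℝ, (1 / 2 * (p.2 ^ 2 * d p.1) * u p.1) * J p.2 ∂(volume.prod volume))
        = ∫ p : ℝ × ℝ, (fun x => u x * d x) p.1 * (fun z => 1 / 2 * (J z * z ^ 2)) p.2
          ∂(volume.prod volume) := by
          congr 1; funext p; simp only; ring
      _ = (∫ x : ℝ, u x * d x) * ∫ z : ℝ, 1 / 2 * (J z * z ^ 2) := integral_prod_mul (μ := volume) (ν := volume) (fun x => u x * d x) (fun z => 1 / 2 * (J z * z ^ 2))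
      _ = ((1 : ℝ) / 2 * ∫ z : ℝ, J z * z ^ 2) * ∫ x : ℝ, u x * d x := by
          rw [integral_const_mul]; ring
  -- step 1 : rewrite the original expression for positive l
  have hstep1 : ∀ l : ℝ, 0 < l →
      l ^ 2 * ∫ x : ℝ, ((∫ y : ℝ, l * J (l * (x - y)) * φ y) - φ x) * u x
        = ∫ p, G l p ∂(volume.prod volume) := by
    intro l hl
    have hl0 : l ≠ 0 := hl.ne'
    obtain ⟨Bφ, hBφ⟩ := hφ_supp.exists_bound_of_continuous hφ_smooth.continuous
    have conv : ∀ x : ℝ, (∫ y : ℝ, l * J (l * (x - y)) * φ y) = ∫ z : ℝ, J z * φ (x - z / l) := by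
      intro x
      have e1 : (∫ y : ℝ, l * J (l * (x - y)) * φ y)
          = ∫ y : ℝ, (fun w => l * J (l * w) * φ (x - w)) (x - y) := by
        congr 1; funext y; simp [sub_sub_cancel]
      rw [e1, integral_sub_left_eq_self (fun w => l * J (l * w) * φ (x - w)) volume x]
      calc ∫ w : ℝ, l * J (l * w) * φ (x - w)
          = ∫ w : ℝ, l * ((fun z => J z * φ (x - z / l)) (l * w)) := by
            congr 1; funext w; simp only
            rw [mul_div_cancel_left₀ _ hl0, mul_assoc]
        _ = l * ∫ w : ℝ, (fun z => J z * φ (x - z / l)) (l * w) := integral_const_mul _ _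
        _ = l * (|l⁻¹| • ∫ z : ℝ, J z * φ (x - z / l)) := by
            rw [Measure.integral_comp_mul_left (fun z => J z * φ (x - z / l)) l]
        _ = ∫ z : ℝ, J z * φ (x - z / l) := by
            rw [smul_eq_mul, abs_inv, abs_of_pos hl, ← mul_assoc, mul_inv_cancel₀ hl0, one_mul]
    have hcφ : Continuous φ := hφ_smooth.continuous
    have hint1 : ∀ c : ℝ, Integrable (fun z : ℝ => J z * φ (c - z / l)) := by
      intro c
      have : Integrable (fun z : ℝ => (fun z : ℝ => φ (c - z / l)) z * J z) :=
        hJ_int.bdd_mul (c := Bφ) ((hcφ.comp (by fun_prop)).aestronglyMeasurable)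
          (Eventually.of_forall fun z => hBφ _)
      simpa [mul_comm] using this
    have hint2 : ∀ c : ℝ, Integrable (fun z : ℝ => J z * φ (c + z / l)) := by
      intro c
      have : Integrable (fun z : ℝ => (fun z : ℝ => φ (c + z / l)) z * J z) :=
        hJ_int.bdd_mul (c := Bφ) ((hcφ.comp (by fun_prop)).aestronglyMeasurable)
          (Eventually.of_forall fun z => hBφ _)
      simpa [mul_comm] using this
    have inner_eq : ∀ x : ℝ, (∫ z : ℝ, J z * φ (x - z / l)) - φ x
        = 1 / 2 * ∫ z : ℝ, J z * (φ (x - z / l) + φ (x + z / l) - 2 * φ x) := by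
      intro x
      have hJφx : Integrable (fun z : ℝ => J z * φ x) := hJ_int.mul_const _
      have I1 : Integrable (fun z : ℝ => J z * (φ (x - z / l) - φ x)) := by
        have := (hint1 x).sub hJφx
        simpa [mul_sub, Pi.sub_def] using this
      have I2 : Integrable (fun z : ℝ => J z * (φ (x + z / l) - φ x)) := by
        have := (hint2 x).sub hJφx
        simpa [mul_sub, Pi.sub_def] using this
      have h1 : ∫ z : ℝ, J z * (φ (x - z / l) - φ x)
          = (∫ z : ℝ, J z * φ (x - z / l)) - φ x := by
        rw [show (fun z : ℝ => J z * (φ (x - z / l) - φ x))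
            = fun z : ℝ => J z * φ (x - z / l) - J z * φ x from funext fun z => by ring]
        rw [integral_sub (hint1 x) hJφx, integral_mul_const, hJ_mass, one_mul]
      have h2 : ∫ z : ℝ, J z * (φ (x - z / l) - φ x)
          = ∫ z : ℝ, J z * (φ (x + z / l) - φ x) := by
        rw [← integral_neg_eq_self (fun z : ℝ => J z * (φ (x + z / l) - φ x)) volume]
        congr 1; funext z
        rw [hJ_even]
        congr 2
        rw [neg_div, ← sub_eq_add_neg]
      have h4 : ∫ z : ℝ, J z * (φ (x - z / l) + φ (x + z / l) - 2 * φ x)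
          = (∫ z : ℝ, J z * (φ (x - z / l) - φ x)) + ∫ z : ℝ, J z * (φ (x + z / l) - φ x) := by
        rw [← integral_add I1 I2]
        congr 1; funext z; ring
      rw [h4, ← h2, h1]; ring
    calc l ^ 2 * ∫ x : ℝ, ((∫ y : ℝ, l * J (l * (x - y)) * φ y) - φ x) * u x
        = l ^ 2 * ∫ x : ℝ,
            (1 / 2 * ∫ z : ℝ, J z * (φ (x - z / l) + φ (x + z / l) - 2 * φ x)) * u x := by
          rw [show (fun x : ℝ => ((∫ y : ℝ, l * J (l * (x - y)) * φ y) - φ x) * u x)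
              = fun x : ℝ =>
                (1 / 2 * ∫ z : ℝ, J z * (φ (x - z / l) + φ (x + z / l) - 2 * φ x)) * u x
              from funext fun x => by rw [conv x, inner_eq x]]
      _ = ∫ x : ℝ, ∫ z : ℝ, G l (x, z) := by
          rw [← integral_const_mul]
          congr 1; funext x
          have e3 : ∫ z : ℝ, G l (x, z)
              = (1 / 2 * l ^ 2 * u x)
                * ∫ z : ℝ, J z * (φ (x - z / l) + φ (x + z / l) - 2 * φ x) := by
            rw [← integral_const_mul]
            congr 1; funext z
            simp only [hG]
            ring
          rw [e3]; ring
      _ = ∫ p, G l p ∂(volume.prod volume) := integral_integral (hGint l hl)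
  rw [hval] at hT
  apply Tendsto.congr' _ hT
  filter_upwards [eventually_gt_atTop 0] with l hl
  exact (hstep1 l hl).symm
end

section
/- Let J ∈ L¹(ℝ) be nonnegative, even, with mass one, and p ≥ 2. For any nonnegative u ∈ L²(ℝ) ∩ L^p(ℝ), ∫_ℝ (J∗u − u)(x) u(x)^{p−1} dx ≤ −(2(p−1)/p²) ∫_ℝ ∫_ℝ J(x−y) (u(x)^{p/2} − u(y)^{p/2})² dx dy. -/
/-!
Write `K(x, y) = J (x - y)`. Since `J` has mass one, `∫ (J ∗ u - u) u^{p-1}` is the double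
integral of `K(x, y) (u y - u x) u(x)^{p-1}`, and since `K` is symmetric, exchanging `x` and `y`
turns it into `-½ ∬ K(x, y) (u x - u y) (u(x)^{p-1} - u(y)^{p-1})`. The claim then follows by
integrating the pointwise inequality
`(4(p-1)/p²) (a^{p/2} - b^{p/2})² ≤ (a - b) (a^{p-1} - b^{p-1})`, which is Cauchy–Schwarz for
`∫_b^a t^{p/2-1} dt`. The first double integral is finite because its integrand is bounded by
`K(x, y) (u(x)^p + u(y)^p)`; the other two are then controlled by it.
-/

open MeasureTheory Real

theorem intervalIntegral.sq_integral_le_mul_integral_sq {f : ℝ → ℝ} {a b : ℝ} (hab : a ≤ b)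
    (hf : ContinuousOn f (Set.uIcc a b)) :
    (∫ x in a..b, f x) ^ 2 ≤ (b - a) * ∫ x in a..b, f x ^ 2 := by
  set I := ∫ x in a..b, f x
  have hf1 : IntervalIntegrable f volume a b := hf.intervalIntegrable
  have hf2 : IntervalIntegrable (fun x => f x ^ 2) volume a b := (hf.pow 2).intervalIntegrable
  have hexpand : ∫ x in a..b, ((b - a) * f x - I) ^ 2
      = (b - a) * ((b - a) * ∫ x in a..b, f x ^ 2) - (b - a) * I ^ 2 := by
    have : ∀ x, ((b - a) * f x - I) ^ 2 = (b - a) ^ 2 * f x ^ 2 - 2 * (b - a) * I * f x + I ^ 2 :=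
      fun x => by ring
    simp_rw [this]
    rw [integral_add ((hf2.const_mul _).sub (hf1.const_mul _)) intervalIntegrable_const,
      integral_sub (hf2.const_mul _) (hf1.const_mul _), integral_const_mul, integral_const_mul,
      integral_const, smul_eq_mul]
    ring
  have hnonneg : 0 ≤ ∫ x in a..b, ((b - a) * f x - I) ^ 2 :=
    integral_nonneg hab fun _ _ => sq_nonneg _
  rcases hab.eq_or_lt with rfl | hlt
  · simp [I]
  · nlinarith

theorem sq_rpow_sub_rpow_div_le_of_le {a b r : ℝ} (hb : 0 ≤ b) (hba : b ≤ a) (hr : 0 ≤ r) :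
    ((a ^ (r + 1) - b ^ (r + 1)) / (r + 1)) ^ 2
      ≤ (a - b) * ((a ^ (2 * r + 1) - b ^ (2 * r + 1)) / (2 * r + 1)) := by
  have hsq : ∫ t in b..a, (t ^ r) ^ 2 = ∫ t in b..a, t ^ (2 * r) := by
    refine intervalIntegral.integral_congr fun t ht => ?_
    rw [Set.uIcc_of_le hba] at ht
    rw [← rpow_natCast, ← rpow_mul (hb.trans ht.1)]
    norm_num [mul_comm]
  have hcs := intervalIntegral.sq_integral_le_mul_integral_sq (f := fun t => t ^ r) hba
    ((continuous_id.rpow_const fun _ => Or.inr hr).continuousOn)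
  rwa [hsq, integral_rpow (Or.inl (by linarith)), integral_rpow (Or.inl (by linarith))] at hcs

theorem four_mul_sq_rpow_half_sub_le_of_le {p a b : ℝ} (hp : 2 ≤ p) (hb : 0 ≤ b) (hba : b ≤ a) :
    4 * (p - 1) / p ^ 2 * (a ^ (p / 2) - b ^ (p / 2)) ^ 2
      ≤ (a - b) * (a ^ (p - 1) - b ^ (p - 1)) := by
  have h := sq_rpow_sub_rpow_div_le_of_le hb hba (r := p / 2 - 1) (by linarith)
  rw [show p / 2 - 1 + 1 = p / 2 by ring, show 2 * (p / 2 - 1) + 1 = p - 1 by ring] at h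
  have hp1 : 0 < p - 1 := by linarith
  calc 4 * (p - 1) / p ^ 2 * (a ^ (p / 2) - b ^ (p / 2)) ^ 2
      = (p - 1) * ((a ^ (p / 2) - b ^ (p / 2)) / (p / 2)) ^ 2 := by
        field_simp; ring
    _ ≤ (p - 1) * ((a - b) * ((a ^ (p - 1) - b ^ (p - 1)) / (p - 1))) := by gcongr
    _ = (a - b) * (a ^ (p - 1) - b ^ (p - 1)) := by field_simp

theorem four_mul_sq_rpow_half_sub_le {p a b : ℝ} (hp : 2 ≤ p) (ha : 0 ≤ a) (hb : 0 ≤ b) :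
    4 * (p - 1) / p ^ 2 * (a ^ (p / 2) - b ^ (p / 2)) ^ 2
      ≤ (a - b) * (a ^ (p - 1) - b ^ (p - 1)) := by
  rcases le_total b a with hba | hab
  · exact four_mul_sq_rpow_half_sub_le_of_le hp hb hba
  · have h := four_mul_sq_rpow_half_sub_le_of_le hp ha hab
    linarith [show (b ^ (p / 2) - a ^ (p / 2)) ^ 2 = (a ^ (p / 2) - b ^ (p / 2)) ^ 2 by ring,
      show (b - a) * (b ^ (p - 1) - a ^ (p - 1)) = (a - b) * (a ^ (p - 1) - b ^ (p - 1)) by ring]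

theorem abs_sub_mul_rpow_sub_one_le {a b q : ℝ} (ha : 0 ≤ a) (hb : 0 ≤ b) (hq : 1 ≤ q) :
    |(b - a) * a ^ (q - 1)| ≤ a ^ q + b ^ q := by
  rw [abs_mul, abs_of_nonneg (rpow_nonneg ha _)]
  rcases le_total a b with hab | hba
  · calc |b - a| * a ^ (q - 1) ≤ b * b ^ (q - 1) := by
          gcongr
          rw [abs_of_nonneg (by linarith)]; linarith
      _ = b ^ q := by rw [mul_comm, ← rpow_add_one' hb (by linarith), sub_add_cancel]
      _ ≤ a ^ q + b ^ q := le_add_of_nonneg_left (rpow_nonneg ha q)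
  · calc |b - a| * a ^ (q - 1) ≤ a * a ^ (q - 1) := by
          gcongr
          rw [abs_of_nonpos (by linarith)]; linarith
      _ = a ^ q := by rw [mul_comm, ← rpow_add_one' ha (by linarith), sub_add_cancel]
      _ ≤ a ^ q + b ^ q := le_add_of_nonneg_right (rpow_nonneg hb q)

namespace MeasureTheory

variable {G : Type*} [AddCommGroup G] {J : G → ℝ}

theorem kernel_mul_sub_mul_sub_eq (hJ_even : ∀ x, J (-x) = J x) (u g : G → ℝ) (z : G × G) :
    J (z.1 - z.2) * ((u z.1 - u z.2) * (g z.1 - g z.2))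
      = -(J (z.1 - z.2) * (u z.2 - u z.1) * g z.1 + J (z.2 - z.1) * (u z.1 - u z.2) * g z.2) := by
  rw [← neg_sub z.1 z.2, hJ_even]
  ring

theorem kernel_mul_sq_rpow_half_sub_le (hJ_nonneg : ∀ x, 0 ≤ J x) {u : G → ℝ}
    (hu_nonneg : ∀ x, 0 ≤ u x) {p : ℝ} (hp : 2 ≤ p) (z : G × G) :
    4 * (p - 1) / p ^ 2 * (J (z.1 - z.2) * (u z.1 ^ (p / 2) - u z.2 ^ (p / 2)) ^ 2)
      ≤ J (z.1 - z.2) * ((u z.1 - u z.2) * (u z.1 ^ (p - 1) - u z.2 ^ (p - 1))) := by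
  rw [mul_left_comm]
  exact mul_le_mul_of_nonneg_left
    (four_mul_sq_rpow_half_sub_le hp (hu_nonneg _) (hu_nonneg _)) (hJ_nonneg _)

variable [MeasurableSpace G] {μ : Measure G} [SFinite μ]

theorem Integrable.kernel_mul_sub_mul_sub (hJ_even : ∀ x, J (-x) = J x) {u g : G → ℝ}
    (hF : Integrable (fun z : G × G => J (z.1 - z.2) * (u z.2 - u z.1) * g z.1) (μ.prod μ)) :
    Integrable (fun z : G × G => J (z.1 - z.2) * ((u z.1 - u z.2) * (g z.1 - g z.2)))
      (μ.prod μ) := by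
  have hFswap : Integrable (fun z : G × G => J (z.2 - z.1) * (u z.1 - u z.2) * g z.2) (μ.prod μ) :=
    hF.swap
  simp_rw [kernel_mul_sub_mul_sub_eq hJ_even]
  exact (hF.add hFswap).neg

theorem integral_prod_kernel_sub_mul_eq (hJ_even : ∀ x, J (-x) = J x) {u g : G → ℝ}
    (hF : Integrable (fun z : G × G => J (z.1 - z.2) * (u z.2 - u z.1) * g z.1) (μ.prod μ)) :
    ∫ z, J (z.1 - z.2) * (u z.2 - u z.1) * g z.1 ∂(μ.prod μ)
      = -(1 / 2) * ∫ z, J (z.1 - z.2) * ((u z.1 - u z.2) * (g z.1 - g z.2)) ∂(μ.prod μ) := by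
  have hFswap : Integrable (fun z : G × G => J (z.2 - z.1) * (u z.1 - u z.2) * g z.2) (μ.prod μ) :=
    hF.swap
  have hswap : ∫ z, J (z.2 - z.1) * (u z.1 - u z.2) * g z.2 ∂(μ.prod μ)
      = ∫ z, J (z.1 - z.2) * (u z.2 - u z.1) * g z.1 ∂(μ.prod μ) :=
    integral_prod_swap (fun z : G × G => J (z.1 - z.2) * (u z.2 - u z.1) * g z.1)
  simp_rw [kernel_mul_sub_mul_sub_eq hJ_even]
  rw [integral_neg, integral_add hF hFswap, hswap]
  ring

variable [MeasurableAdd₂ G] [MeasurableNeg G] [μ.IsAddLeftInvariant]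

theorem AEStronglyMeasurable.comp_sub_prod (hJ : AEStronglyMeasurable J μ) :
    AEStronglyMeasurable (fun z : G × G => J (z.1 - z.2)) (μ.prod μ) :=
  hJ.comp_quasiMeasurePreserving (quasiMeasurePreserving_sub_of_right_invariant μ μ)

theorem Integrable.comp_sub_mul_snd (hJ : Integrable J μ) {φ : G → ℝ} (hφ : Integrable φ μ) :
    Integrable (fun z : G × G => J (z.1 - z.2) * φ z.2) (μ.prod μ) := by
  simpa [mul_comm] using hφ.convolution_integrand (ContinuousLinearMap.mul ℝ ℝ) hJ

theorem Integrable.kernel_mul_sq_rpow_half_sub (hJ_nonneg : ∀ x, 0 ≤ J x)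
    (hJ : AEStronglyMeasurable J μ) {u : G → ℝ} (hu : AEStronglyMeasurable u μ)
    (hu_nonneg : ∀ x, 0 ≤ u x) {p : ℝ} (hp : 2 ≤ p)
    (hD : Integrable
      (fun z : G × G => J (z.1 - z.2) * ((u z.1 - u z.2) * (u z.1 ^ (p - 1) - u z.2 ^ (p - 1))))
      (μ.prod μ)) :
    Integrable (fun z : G × G => J (z.1 - z.2) * (u z.1 ^ (p / 2) - u z.2 ^ (p / 2)) ^ 2)
      (μ.prod μ) := by
  have hc : 0 < 4 * (p - 1) / p ^ 2 := by
    have : 0 < p - 1 := by linarith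
    positivity
  have hH : AEStronglyMeasurable (fun x => u x ^ (p / 2)) μ := by
    fun_prop (disch := linarith)
  refine (hD.div_const (4 * (p - 1) / p ^ 2)).mono'
    (hJ.comp_sub_prod.mul ((hH.comp_fst.sub hH.comp_snd).pow 2)) (ae_of_all _ fun z => ?_)
  rw [norm_of_nonneg (mul_nonneg (hJ_nonneg _) (sq_nonneg _)), le_div_iff₀' hc]
  exact kernel_mul_sq_rpow_half_sub_le hJ_nonneg hu_nonneg hp z

theorem integral_kernel_mul_sq_rpow_half_sub_le (hJ_nonneg : ∀ x, 0 ≤ J x)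
    (hJ : AEStronglyMeasurable J μ) {u : G → ℝ} (hu : AEStronglyMeasurable u μ)
    (hu_nonneg : ∀ x, 0 ≤ u x) {p : ℝ} (hp : 2 ≤ p)
    (hD : Integrable
      (fun z : G × G => J (z.1 - z.2) * ((u z.1 - u z.2) * (u z.1 ^ (p - 1) - u z.2 ^ (p - 1))))
      (μ.prod μ)) :
    4 * (p - 1) / p ^ 2 * ∫ z, J (z.1 - z.2) * (u z.1 ^ (p / 2) - u z.2 ^ (p / 2)) ^ 2 ∂(μ.prod μ)
      ≤ ∫ z, J (z.1 - z.2) * ((u z.1 - u z.2) * (u z.1 ^ (p - 1) - u z.2 ^ (p - 1))) ∂(μ.prod μ) := by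
  rw [← integral_const_mul]
  exact integral_mono ((hD.kernel_mul_sq_rpow_half_sub hJ_nonneg hJ hu hu_nonneg hp).const_mul _)
    hD (kernel_mul_sq_rpow_half_sub_le hJ_nonneg hu_nonneg hp)

variable [μ.IsNegInvariant]

theorem Integrable.comp_sub_mul_fst (hJ : Integrable J μ) {φ : G → ℝ} (hφ : Integrable φ μ) :
    Integrable (fun z : G × G => J (z.1 - z.2) * φ z.1) (μ.prod μ) := by
  simpa [Function.comp_def] using (hJ.comp_neg.comp_sub_mul_snd hφ).swap

theorem Integrable.kernel_mul_sub_mul_rpow_sub_one (hJ : Integrable J μ)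
    (hJ_nonneg : ∀ x, 0 ≤ J x) {u : G → ℝ} (hu : AEStronglyMeasurable u μ)
    (hu_nonneg : ∀ x, 0 ≤ u x) {p : ℝ} (hp : 1 ≤ p) (hup : Integrable (fun x => u x ^ p) μ) :
    Integrable (fun z : G × G => J (z.1 - z.2) * (u z.2 - u z.1) * u z.1 ^ (p - 1)) (μ.prod μ) := by
  have hG : AEStronglyMeasurable (fun x => u x ^ (p - 1)) μ := by
    fun_prop (disch := linarith)
  refine ((hJ.comp_sub_mul_fst hup).add (hJ.comp_sub_mul_snd hup)).mono'
    ((hJ.1.comp_sub_prod.mul (hu.comp_snd.sub hu.comp_fst)).mul hG.comp_fst)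
    (ae_of_all _ fun z => ?_)
  rw [Pi.add_apply, norm_eq_abs, mul_assoc, abs_mul, abs_of_nonneg (hJ_nonneg _), ← mul_add]
  exact mul_le_mul_of_nonneg_left
    (abs_sub_mul_rpow_sub_one_le (hu_nonneg _) (hu_nonneg _) hp) (hJ_nonneg _)

theorem integral_kernel_sub_self_mul_eq_integral_prod (hJ : Integrable J μ)
    (hJ_mass : ∫ x, J x ∂μ = 1) {u g : G → ℝ}
    (hF : Integrable (fun z : G × G => J (z.1 - z.2) * (u z.2 - u z.1) * g z.1) (μ.prod μ)) :
    ∫ x, ((∫ y, J (x - y) * u y ∂μ) - u x) * g x ∂μ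
      = ∫ z, J (z.1 - z.2) * (u z.2 - u z.1) * g z.1 ∂(μ.prod μ) := by
  rw [integral_prod _ hF]
  refine integral_congr_ae ?_
  filter_upwards [hF.prod_right_ae] with x hx
  have hconst : Integrable (fun y => J (x - y) * (u x * g x)) μ :=
    (hJ.comp_sub_left x).mul_const _
  -- `y ↦ J (x - y) * u y` need not be integrable, but its product with `g x` is, for a.e. `x`.
  have hconv : Integrable (fun y => J (x - y) * u y * g x) μ :=
    (hx.add hconst).congr (ae_of_all _ fun y => by simp only [Pi.add_apply]; ring)
  calc ((∫ y, J (x - y) * u y ∂μ) - u x) * g x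
      = ∫ y, J (x - y) * u y * g x ∂μ - ∫ y, J (x - y) * (u x * g x) ∂μ := by
        rw [integral_mul_const, integral_mul_const, integral_sub_left_eq_self J μ x, hJ_mass]
        ring
    _ = ∫ y, J (x - y) * (u y - u x) * g x ∂μ := by
        rw [← integral_sub hconv hconst]
        congr 1 with y
        ring

end MeasureTheory

theorem stmt13_general (J : ℝ → ℝ) (hJ_nonneg : ∀ x, 0 ≤ J x) (hJ_even : ∀ x, J (-x) = J x)
    (hJ_int : Integrable J) (hJ_mass : ∫ x : ℝ, J x = 1)
    (p : ℝ) (hp : 2 ≤ p)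
    (u : ℝ → ℝ) (hu_nonneg : ∀ x, 0 ≤ u x)
    (hu_Lp : MemLp u (ENNReal.ofReal p) (volume : Measure ℝ)) :
    ∫ x : ℝ, ((∫ y : ℝ, J (x - y) * u y) - u x) * (u x) ^ (p - 1) ≤
      -(2 * (p - 1) / p ^ 2) *
        ∫ x : ℝ, ∫ y : ℝ, J (x - y) * ((u x) ^ (p / 2) - (u y) ^ (p / 2)) ^ 2 := by
  have hu := hu_Lp.aestronglyMeasurable
  have hup : Integrable (fun x => u x ^ p) := by
    simpa [ENNReal.toReal_ofReal (by linarith : 0 ≤ p), norm_of_nonneg (hu_nonneg _)] using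
      hu_Lp.integrable_norm_rpow (ENNReal.ofReal_pos.mpr (by linarith)).ne' ENNReal.ofReal_ne_top
  have hF := hJ_int.kernel_mul_sub_mul_rpow_sub_one hJ_nonneg hu hu_nonneg (by linarith) hup
  have hD := Integrable.kernel_mul_sub_mul_sub (u := u) (g := fun x => u x ^ (p - 1)) hJ_even hF
  have hS := hD.kernel_mul_sq_rpow_half_sub hJ_nonneg hJ_int.1 hu hu_nonneg hp
  rw [integral_kernel_sub_self_mul_eq_integral_prod (u := u) hJ_int hJ_mass hF,
    integral_prod_kernel_sub_mul_eq (u := u) (g := fun x => u x ^ (p - 1)) hJ_even hF,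
    integral_integral hS, show 2 * (p - 1) / p ^ 2 = 4 * (p - 1) / p ^ 2 / 2 by ring]
  linarith [integral_kernel_mul_sq_rpow_half_sub_le hJ_nonneg hJ_int.1 hu hu_nonneg hp hD]

/-- for `p ≥ 2` and nonnegative `u ∈ L² ∩ L^p`,
`∫ (J∗u − u) u^{p−1} ≤ −(2(p−1)/p²) ∬ J(x−y)(u(x)^{p/2} − u(y)^{p/2})²`. -/
theorem stmt13 (J : ℝ → ℝ) (hJ_nonneg : ∀ x, 0 ≤ J x) (hJ_even : ∀ x, J (-x) = J x)
    (hJ_int : Integrable J) (hJ_mass : ∫ x : ℝ, J x = 1)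
    (p : ℝ) (hp : 2 ≤ p)
    (u : ℝ → ℝ) (hu_nonneg : ∀ x, 0 ≤ u x)
    (hu_L2 : MemLp u 2 (volume : Measure ℝ))
    (hu_Lp : MemLp u (ENNReal.ofReal p) (volume : Measure ℝ)) :
    ∫ x : ℝ, ((∫ y : ℝ, J (x - y) * u y) - u x) * (u x) ^ (p - 1) ≤
      -(2 * (p - 1) / p ^ 2) *
        ∫ x : ℝ, ∫ y : ℝ, J (x - y) * ((u x) ^ (p / 2) - (u y) ^ (p / 2)) ^ 2 :=
  stmt13_general J hJ_nonneg hJ_even hJ_int hJ_mass p hp u hu_nonneg hu_Lp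
end
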